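/- Let N ≥ 1 be an integer, m > 1, and let y ∈ ℝ^N, t₁ ∈ ℝ, u₁ > 0, C > 0, k > N - 1 and η_max ∈ (0,1). Define η_k(x,t) = exp(-k(|x-y| - 1)) · exp(u₁^{m-1}(t - t₁)) and Θ_k(x,t) = C u₁ (1 - η_k(x,t))^{1/m}. If C^{m-1} ( k² - (N-1)k ) ≥ (1/m) (1 - η_max)^{(1-m)/m}, then at every point (x,t) with |x - y| ≥ 1 and η_k(x,t) ≤ η_max one has the pointwise super-solution inequality ∂_t Θ_k(x,t) - Δ_x( Θ_k(x,t)^{m} ) ≥ 0. -/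

import Mathlib

open Real Filter Topology
open scoped RealInnerProductSpace

noncomputable section

/-- Divergence (in the space variables) of a vector field on Euclidean space. -/
noncomputable def sdiv {N : ℕ} (F : EuclideanSpace ℝ (Fin N) → EuclideanSpace ℝ (Fin N))
    (x : EuclideanSpace ℝ (Fin N)) : ℝ :=
  ∑ i, fderiv ℝ F x (EuclideanSpace.single i 1) i

/-- The Laplacian of a function on Euclidean space, as the divergence of its gradient. -/
noncomputable def lap {N : ℕ} (f : EuclideanSpace ℝ (Fin N) → ℝ)
    (x : EuclideanSpace ℝ (Fin N)) : ℝ :=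
  sdiv (gradient f) x

/-- `u` is a (non-negative) classical solution of the porous medium equation
`∂ₜ u = Δ (u^m)` on `U`: at every point of `U`, `u` is non-negative, differentiable in `t`,
`u^m` is twice differentiable in `x` (its gradient being differentiable, so that the spatial
Laplacian is meaningful), and the equation holds pointwise. -/
def IsPMSolOn {N : ℕ} (m : ℝ) (u : EuclideanSpace ℝ (Fin N) → ℝ → ℝ)
    (U : Set (EuclideanSpace ℝ (Fin N) × ℝ)) : Prop :=
  ∀ q ∈ U,
    0 ≤ u q.1 q.2 ∧
    DifferentiableAt ℝ (u q.1) q.2 ∧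
    DifferentiableAt ℝ (fun y => u y q.2 ^ m) q.1 ∧
    DifferentiableAt ℝ (gradient (fun y => u y q.2 ^ m)) q.1 ∧
    deriv (u q.1) q.2 = lap (fun y => u y q.2 ^ m) q.1

/-- `u` is a (non-negative) classical super-solution of the porous medium equation on `U`:
at every point of `U`, `u` is non-negative, differentiable in `t`, `u^m` is twice
differentiable in `x`, and `∂ₜ u - Δ (u^m) ≥ 0` holds pointwise. -/
def IsPMSupersolOn {N : ℕ} (m : ℝ) (u : EuclideanSpace ℝ (Fin N) → ℝ → ℝ)
    (U : Set (EuclideanSpace ℝ (Fin N) × ℝ)) : Prop :=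
  ∀ q ∈ U,
    0 ≤ u q.1 q.2 ∧
    DifferentiableAt ℝ (u q.1) q.2 ∧
    DifferentiableAt ℝ (fun y => u y q.2 ^ m) q.1 ∧
    DifferentiableAt ℝ (gradient (fun y => u y q.2 ^ m)) q.1 ∧
    0 ≤ deriv (u q.1) q.2 - lap (fun y => u y q.2 ^ m) q.1

lemma hasFDerivAt_norm_sub' {N : ℕ} (y x : EuclideanSpace ℝ (Fin N)) (hx : x ≠ y) :
    HasFDerivAt (fun z => ‖z - y‖) (‖x - y‖⁻¹ • (innerSL ℝ (x - y))) x := by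
  have hw0 : x - y ≠ 0 := sub_ne_zero.2 hx
  have hr0 : ‖x - y‖ ≠ 0 := norm_ne_zero_iff.2 hw0
  have hw : HasFDerivAt (fun z : EuclideanSpace ℝ (Fin N) => z - y)
      (ContinuousLinearMap.id ℝ _) x := (hasFDerivAt_id x).sub_const y
  have hq := hw.inner ℝ hw
  have hnz : (⟪x - y, x - y⟫) ≠ 0 := by
    rw [real_inner_self_eq_norm_sq]; positivity
  have h2 := (Real.hasDerivAt_sqrt hnz).comp_hasFDerivAt x hq
  have hs : Real.sqrt (⟪x - y, x - y⟫) = ‖x - y‖ := by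
    rw [real_inner_self_eq_norm_sq, Real.sqrt_sq (norm_nonneg _)]
  convert h2 using 1
  · rfl
  · rfl
  · rfl
  · funext z
    show ‖z - y‖ = Real.sqrt (⟪z - y, z - y⟫)
    rw [real_inner_self_eq_norm_sq, Real.sqrt_sq (norm_nonneg _)]
  · ext v
    simp only [ContinuousLinearMap.smul_apply, ContinuousLinearMap.coe_comp',
      Function.comp_apply, ContinuousLinearMap.prod_apply, ContinuousLinearMap.coe_id',
      id_eq, fderivInnerCLM_apply, innerSL_apply_apply, smul_eq_mul, hs]
    rw [real_inner_comm v (x - y)]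
    field_simp
    ring

lemma space_calc {N : ℕ} (y : EuclideanSpace ℝ (Fin N)) (A c k : ℝ)
    (x : EuclideanSpace ℝ (Fin N)) (hx : x ≠ y) :
    DifferentiableAt ℝ (fun z => A + c * Real.exp (-(k * ‖z - y‖))) x ∧
    DifferentiableAt ℝ (gradient (fun z => A + c * Real.exp (-(k * ‖z - y‖)))) x ∧
    lap (fun z => A + c * Real.exp (-(k * ‖z - y‖))) x
      = c * Real.exp (-(k * ‖x - y‖)) * (k ^ 2 - ((N : ℝ) - 1) * k / ‖x - y‖) := by
  set g : EuclideanSpace ℝ (Fin N) → ℝ := fun z => A + c * Real.exp (-(k * ‖z - y‖)) with hgdef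
  set ρ : EuclideanSpace ℝ (Fin N) → ℝ :=
    fun z => -(c * k) * (Real.exp (-(k * ‖z - y‖)) * ‖z - y‖⁻¹) with hρdef
  have stepA : ∀ z : EuclideanSpace ℝ (Fin N), z ≠ y → HasGradientAt g (ρ z • (z - y)) z := by
    intro z hz
    have hr0 : ‖z - y‖ ≠ 0 := norm_ne_zero_iff.2 (sub_ne_zero.2 hz)
    have h1 : HasDerivAt (fun s : ℝ => -(k * s)) (-k) ‖z - y‖ := by
      simpa [neg_mul] using HasDerivAt.const_mul (-k) (hasDerivAt_id ‖z - y‖)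
    have h3 := ((h1.exp).const_mul c).const_add A
    have hgf := h3.comp_hasFDerivAt z (hasFDerivAt_norm_sub' y z hz)
    rw [hasGradientAt_iff_hasFDerivAt]
    convert hgf using 1
    · rfl
    · rfl
    ext v
    simp only [InnerProductSpace.toDual_apply_apply, ContinuousLinearMap.smul_apply, innerSL_apply_apply,
      smul_eq_mul, real_inner_smul_left, hρdef]
    ring
  have hr0 : ‖x - y‖ ≠ 0 := norm_ne_zero_iff.2 (sub_ne_zero.2 hx)
  have hne : ∀ᶠ z in 𝓝 x, z ≠ y := by
    have : IsOpen ({y}ᶜ : Set (EuclideanSpace ℝ (Fin N))) := isOpen_compl_singleton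
    exact (this.eventually_mem hx).mono fun z hz => hz
  have hgradV : gradient g =ᶠ[𝓝 x] fun z => ρ z • (z - y) :=
    hne.mono fun z hz => (stepA z hz).gradient
  have h1 : HasDerivAt (fun s : ℝ => -(k * s)) (-k) ‖x - y‖ := by
    simpa [neg_mul] using HasDerivAt.const_mul (-k) (hasDerivAt_id ‖x - y‖)
  have hinv : HasDerivAt (fun s : ℝ => s⁻¹) (-(‖x - y‖ ^ 2)⁻¹) ‖x - y‖ := hasDerivAt_inv hr0
  have hψ := ((h1.exp).mul hinv).const_mul (-(c * k))
  have hρ' : HasFDerivAt ρ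
      ((-(c * k) * (Real.exp (-(k * ‖x - y‖)) * -k * ‖x - y‖⁻¹ +
         Real.exp (-(k * ‖x - y‖)) * -(‖x - y‖ ^ 2)⁻¹)) •
        (‖x - y‖⁻¹ • innerSL ℝ (x - y))) x :=
    HasDerivAt.comp_hasFDerivAt (h₂ := fun s : ℝ => -(c * k) * (Real.exp (-(k * s)) * s⁻¹))
      (f := fun z => ‖z - y‖) x hψ (hasFDerivAt_norm_sub' y x hx)
  have hid : HasFDerivAt (fun z : EuclideanSpace ℝ (Fin N) => z - y)
      (ContinuousLinearMap.id ℝ _) x := (hasFDerivAt_id x).sub_const y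
  have hV : HasFDerivAt (fun z => ρ z • (z - y))
      (ρ x • ContinuousLinearMap.id ℝ _ +
        ((-(c * k) * (Real.exp (-(k * ‖x - y‖)) * -k * ‖x - y‖⁻¹ +
           Real.exp (-(k * ‖x - y‖)) * -(‖x - y‖ ^ 2)⁻¹)) •
          (‖x - y‖⁻¹ • innerSL ℝ (x - y))).smulRight (x - y)) x := hρ'.smul hid
  refine ⟨(stepA x hx).differentiableAt, hV.differentiableAt.congr_of_eventuallyEq hgradV, ?_⟩
  have hfd := hgradV.fderiv_eq.trans hV.fderiv
  set dd : ℝ := -(c * k) * (Real.exp (-(k * ‖x - y‖)) * -k * ‖x - y‖⁻¹ +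
      Real.exp (-(k * ‖x - y‖)) * -(‖x - y‖ ^ 2)⁻¹) with hdd
  have hlap : lap g x = ∑ i, ((ρ x *
        ((EuclideanSpace.single i (1:ℝ)) i)) +
        (dd * (‖x - y‖⁻¹ * ((x - y) i))) * ((x - y) i)) := by
    unfold lap sdiv
    rw [hfd]
    refine Finset.sum_congr rfl fun i _ => ?_
    simp [ContinuousLinearMap.add_apply, ContinuousLinearMap.smul_apply,
      ContinuousLinearMap.id_apply, ContinuousLinearMap.smulRight_apply, innerSL_apply_apply,
      PiLp.add_apply, PiLp.smul_apply, smul_eq_mul, EuclideanSpace.inner_single_right,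
      conj_trivial, mul_comm]
  have hsum : ∑ i, (x - y) i * (x - y) i = ‖x - y‖ ^ 2 := by
    rw [← real_inner_self_eq_norm_sq]
    simp only [PiLp.inner_apply, RCLike.inner_apply, conj_trivial]
  have key : ∀ i : Fin N, ρ x * (EuclideanSpace.single i (1:ℝ)) i +
      dd * (‖x - y‖⁻¹ * (x - y) i) * (x - y) i
      = ρ x + (dd * ‖x - y‖⁻¹) * ((x - y) i * (x - y) i) := fun i => by
    simp [EuclideanSpace.single_apply]; ring
  rw [hlap, Finset.sum_congr rfl fun i _ => key i, Finset.sum_add_distrib, Finset.sum_const,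
    ← Finset.mul_sum, hsum, Finset.card_univ, Fintype.card_fin, nsmul_eq_mul]
  simp only [hρdef, hdd]
  have hexp : Real.exp (-(k * ‖x - y‖)) ≠ 0 := Real.exp_ne_zero _
  field_simp
  ring

theorem stmt9 (N : ℕ) (hN : 1 ≤ N) (m : ℝ) (hm : 1 < m)
    (y : EuclideanSpace ℝ (Fin N)) (t₁ u1 C k ηmax : ℝ)
    (hu1 : 0 < u1) (hC : 0 < C) (hk : (N : ℝ) - 1 < k)
    (hηmax0 : 0 < ηmax) (hηmax1 : ηmax < 1)
    (hcond : (1 / m) * (1 - ηmax) ^ ((1 - m) / m) ≤ C ^ (m - 1) * (k ^ 2 - ((N : ℝ) - 1) * k)) :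
    let η : EuclideanSpace ℝ (Fin N) → ℝ → ℝ := fun x t =>
      Real.exp (-(k * (‖x - y‖ - 1))) * Real.exp (u1 ^ (m - 1) * (t - t₁))
    let Θ : EuclideanSpace ℝ (Fin N) → ℝ → ℝ := fun x t => C * u1 * (1 - η x t) ^ (1 / m)
    IsPMSupersolOn m Θ {q | 1 ≤ ‖q.1 - y‖ ∧ η q.1 q.2 ≤ ηmax} := by
  intro η Θ
  rintro ⟨x, t⟩ ⟨hr1, hηle⟩
  have hm0 : (0:ℝ) < m := lt_trans one_pos hm
  have hr0 : (0:ℝ) < ‖x - y‖ := lt_of_lt_of_le one_pos hr1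
  have hxy : x ≠ y := by
    intro h; rw [h, sub_self, norm_zero] at hr0; exact lt_irrefl 0 hr0
  have hN1 : (0:ℝ) ≤ (N:ℝ) - 1 := by
    have : (1:ℝ) ≤ (N:ℝ) := by exact_mod_cast hN
    linarith
  have hkpos : 0 < k := lt_of_le_of_lt hN1 hk
  have hηle' : Real.exp (-(k * (‖x - y‖ - 1))) * Real.exp (u1 ^ (m - 1) * (t - t₁)) ≤ ηmax :=
    hηle
  have hη0 : 0 < Real.exp (-(k * (‖x - y‖ - 1))) * Real.exp (u1 ^ (m - 1) * (t - t₁)) :=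
    mul_pos (Real.exp_pos _) (Real.exp_pos _)
  have hη1 : Real.exp (-(k * (‖x - y‖ - 1))) * Real.exp (u1 ^ (m - 1) * (t - t₁)) < 1 :=
    lt_of_le_of_lt hηle' hηmax1
  have h1η : (0:ℝ) < 1 - Real.exp (-(k * (‖x - y‖ - 1))) * Real.exp (u1 ^ (m - 1) * (t - t₁)) :=
    by linarith
  -- time derivative
  have hEt : HasDerivAt (fun t' => Real.exp (u1 ^ (m - 1) * (t' - t₁)))
      (Real.exp (u1 ^ (m - 1) * (t - t₁)) * u1 ^ (m - 1)) t := by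
    have h0 : HasDerivAt (fun t' : ℝ => u1 ^ (m - 1) * (t' - t₁)) (u1 ^ (m - 1)) t := by
      simpa using HasDerivAt.const_mul (u1 ^ (m - 1)) ((hasDerivAt_id t).sub_const t₁)
    simpa using h0.exp
  have hηt : HasDerivAt (fun t' => Real.exp (-(k * (‖x - y‖ - 1))) * Real.exp (u1 ^ (m - 1) * (t' - t₁)))
      (Real.exp (-(k * (‖x - y‖ - 1))) * (Real.exp (u1 ^ (m - 1) * (t - t₁)) * u1 ^ (m - 1))) t :=
    HasDerivAt.const_mul _ hEt
  have h1ηt : HasDerivAt (fun t' => 1 - Real.exp (-(k * (‖x - y‖ - 1))) * Real.exp (u1 ^ (m - 1) * (t' - t₁)))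
      (-(Real.exp (-(k * (‖x - y‖ - 1))) * (Real.exp (u1 ^ (m - 1) * (t - t₁)) * u1 ^ (m - 1)))) t :=
    hηt.const_sub 1
  have hΘt : HasDerivAt (Θ x)
      (C * u1 * ((-(Real.exp (-(k * (‖x - y‖ - 1))) * (Real.exp (u1 ^ (m - 1) * (t - t₁)) * u1 ^ (m - 1)))) *
        (1 / m) *
        (1 - Real.exp (-(k * (‖x - y‖ - 1))) * Real.exp (u1 ^ (m - 1) * (t - t₁))) ^ (1 / m - 1))) t := by
    exact HasDerivAt.const_mul (C * u1) (h1ηt.rpow_const (Or.inl (ne_of_gt h1η)))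
  -- spatial part
  obtain ⟨hdg, hdgrad, hlapg⟩ := space_calc y ((C * u1) ^ m)
    (-((C * u1) ^ m * (Real.exp k * Real.exp (u1 ^ (m - 1) * (t - t₁))))) k x hxy
  have hcont : Continuous fun z : EuclideanSpace ℝ (Fin N) => η z t := by
    have c1 : Continuous fun z : EuclideanSpace ℝ (Fin N) => ‖z - y‖ :=
      (continuous_id.sub continuous_const).norm
    exact (Real.continuous_exp.comp ((continuous_const.mul (c1.sub continuous_const)).neg)).mul
      continuous_const
  have hev : ∀ᶠ z in 𝓝 x, η z t < 1 :=
    hcont.continuousAt.eventually_lt continuousAt_const hη1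
  have hfeq : (fun z => Θ z t ^ m) =ᶠ[𝓝 x]
      (fun z => (C * u1) ^ m +
        -((C * u1) ^ m * (Real.exp k * Real.exp (u1 ^ (m - 1) * (t - t₁)))) *
          Real.exp (-(k * ‖z - y‖))) := by
    filter_upwards [hev] with z hz
    have h1z : (0:ℝ) < 1 - η z t := by linarith
    show (C * u1 * (1 - η z t) ^ (1 / m)) ^ m = _
    rw [Real.mul_rpow (by positivity) (Real.rpow_nonneg h1z.le _),
      ← Real.rpow_mul h1z.le, one_div, inv_mul_cancel₀ (ne_of_gt hm0), Real.rpow_one]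
    have hsplit : Real.exp (-(k * (‖z - y‖ - 1))) = Real.exp k * Real.exp (-(k * ‖z - y‖)) := by
      rw [← Real.exp_add]; congr 1; ring
    show (C * u1) ^ m * (1 - Real.exp (-(k * (‖z - y‖ - 1))) * Real.exp (u1 ^ (m - 1) * (t - t₁))) = _
    rw [hsplit]; ring
  have hd1 : DifferentiableAt ℝ (fun z => Θ z t ^ m) x := hdg.congr_of_eventuallyEq hfeq
  have hgeq := hfeq.gradient
  have hd2 : DifferentiableAt ℝ (gradient fun z => Θ z t ^ m) x :=
    hdgrad.congr_of_eventuallyEq hgeq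
  have hlapeq : lap (fun z => Θ z t ^ m) x =
      lap (fun z => (C * u1) ^ m +
        -((C * u1) ^ m * (Real.exp k * Real.exp (u1 ^ (m - 1) * (t - t₁)))) *
          Real.exp (-(k * ‖z - y‖))) x := by
    unfold lap sdiv
    rw [hgeq.fderiv_eq]
  refine ⟨mul_nonneg (by positivity) (Real.rpow_nonneg h1η.le _), hΘt.differentiableAt, hd1, hd2, ?_⟩
  rw [hΘt.deriv, hlapeq, hlapg]
  -- algebraic identities
  have hexp2 : (1 - Real.exp (-(k * (‖x - y‖ - 1))) * Real.exp (u1 ^ (m - 1) * (t - t₁))) ^ (1 / m - 1)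
      = (1 - Real.exp (-(k * (‖x - y‖ - 1))) * Real.exp (u1 ^ (m - 1) * (t - t₁))) ^ ((1 - m) / m) := by
    congr 1; field_simp
  have hu1m : u1 ^ m = u1 * u1 ^ (m - 1) := by
    have h := Real.rpow_add hu1 1 (m - 1)
    rw [Real.rpow_one] at h
    rw [show (1:ℝ) + (m - 1) = m from by ring] at h
    exact h
  have hCm : (C * u1) ^ m = C ^ (m - 1) * C * u1 ^ m := by
    rw [Real.mul_rpow hC.le hu1.le]
    have h := Real.rpow_add hC (m - 1) 1
    rw [Real.rpow_one] at h
    rw [show (m - 1) + (1:ℝ) = m from by ring] at h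
    rw [h]
  have hsplitx : Real.exp (-(k * (‖x - y‖ - 1))) = Real.exp k * Real.exp (-(k * ‖x - y‖)) := by
    rw [← Real.exp_add]; congr 1; ring
  -- key inequality
  have hexpneg : (1 - m) / m ≤ 0 :=
    div_nonpos_of_nonpos_of_nonneg (by linarith) hm0.le
  have key1 : (1 / m) *
      (1 - Real.exp (-(k * (‖x - y‖ - 1))) * Real.exp (u1 ^ (m - 1) * (t - t₁))) ^ ((1 - m) / m)
      ≤ (1 / m) * (1 - ηmax) ^ ((1 - m) / m) := by
    apply mul_le_mul_of_nonneg_left _ (by positivity)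
    exact Real.rpow_le_rpow_of_nonpos (by linarith) (by linarith) hexpneg
  have key3 : C ^ (m - 1) * (k ^ 2 - ((N : ℝ) - 1) * k) ≤
      C ^ (m - 1) * (k ^ 2 - ((N : ℝ) - 1) * k / ‖x - y‖) := by
    apply mul_le_mul_of_nonneg_left _ (Real.rpow_nonneg hC.le _)
    have : ((N : ℝ) - 1) * k / ‖x - y‖ ≤ ((N : ℝ) - 1) * k :=
      div_le_self (mul_nonneg hN1 hkpos.le) hr1
    linarith
  have key : (1 / m) *
      (1 - Real.exp (-(k * (‖x - y‖ - 1))) * Real.exp (u1 ^ (m - 1) * (t - t₁))) ^ ((1 - m) / m)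
      ≤ C ^ (m - 1) * (k ^ 2 - ((N : ℝ) - 1) * k / ‖x - y‖) :=
    le_trans key1 (le_trans hcond key3)
  rw [hexp2]
  have final : C * u1 * ((-(Real.exp (-(k * (‖x - y‖ - 1))) * (Real.exp (u1 ^ (m - 1) * (t - t₁)) * u1 ^ (m - 1)))) *
        (1 / m) *
        (1 - Real.exp (-(k * (‖x - y‖ - 1))) * Real.exp (u1 ^ (m - 1) * (t - t₁))) ^ ((1 - m) / m)) -
      -((C * u1) ^ m * (Real.exp k * Real.exp (u1 ^ (m - 1) * (t - t₁)))) *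
        Real.exp (-(k * ‖x - y‖)) * (k ^ 2 - ((N : ℝ) - 1) * k / ‖x - y‖)
      = (C * (u1 ^ m * (Real.exp (-(k * (‖x - y‖ - 1))) * Real.exp (u1 ^ (m - 1) * (t - t₁))))) *
        (C ^ (m - 1) * (k ^ 2 - ((N : ℝ) - 1) * k / ‖x - y‖) - (1 / m) *
          (1 - Real.exp (-(k * (‖x - y‖ - 1))) * Real.exp (u1 ^ (m - 1) * (t - t₁))) ^ ((1 - m) / m)) := by
    rw [hCm, hu1m, hsplitx]; ring
  rw [final]
  exact mul_nonneg (by positivity) (by linarith)
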